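/- Let φ : [0,1]^d → ℝ^N be twice continuously differentiable, let θ ∈ ℝ^N and c ∈ ℝ, and let q_θ(x) = exp(⟨θ, φ(x)⟩ + c) be strictly positive on [0,1]^d. Then for every x ∈ [0,1]^d the bounded-domain Hyvärinen score satisfies h(x, q_θ) = (1/2) θᵀ Ã(x) θ + K(x)ᵀ θ, where a_i(x) := x_i(1−x_i) ∂_i φ(x), Ã(x) := Σ_{i=1}^d a_i(x) a_i(x)ᵀ, and K(x) := Σ_{i=1}^d [ −2(2x_i−1) x_i(1−x_i) ∂_i φ(x) + x_i²(1−x_i)² ∂_i² φ(x) ]. In particular θ ↦ h(x, q_θ) is a positive-semidefinite quadratic form plus a linear term in θ. (Second part of Proposition 1.) -/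

import Mathlib

/-!
`log q_θ = ⟨θ, φ⟩ + c` is affine in `θ`, so its first and second partial derivatives (taken within
the cube, where they are unique) are linear in `θ`. Substituting them into the score gives a
quadratic plus a linear form in `θ`; the quadratic part is `∑ i ⟨a_i, θ⟩²`, i.e. the Gram
matrix `Ã = Aᵀ A` of the vectors `a_i`, which is positive semidefinite.
-/

/-- Partial derivative in coordinate `i`, taken within the cube `[0,1]^d`. -/
noncomputable def pdW {d : ℕ} (i : Fin d) (f : (Fin d → ℝ) → ℝ) (x : Fin d → ℝ) : ℝ :=
  fderivWithin ℝ f (Set.Icc 0 1) x (Pi.single i 1)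

/-- Bounded-domain Hyvärinen score on `[0,1]^d`:
`h(x,q) = ∑ i [ (1/2) x_i²(1−x_i)² (∂_i log q)² − 2(2x_i−1)x_i(1−x_i) ∂_i log q
  + x_i²(1−x_i)² ∂_i² log q ]`. -/
noncomputable def hScoreW {d : ℕ} (q : (Fin d → ℝ) → ℝ) (x : Fin d → ℝ) : ℝ :=
  ∑ i : Fin d,
    ((1/2) * (x i)^2 * (1 - x i)^2 * (pdW i (fun y => Real.log (q y)) x)^2
      - 2 * (2 * x i - 1) * (x i) * (1 - x i) * pdW i (fun y => Real.log (q y)) x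
      + (x i)^2 * (1 - x i)^2 * pdW i (pdW i (fun y => Real.log (q y))) x)

open Finset

lemma uniqueDiffOn_Icc_zero_one_pi {ι : Type*} : UniqueDiffOn ℝ (Set.Icc (0 : ι → ℝ) 1) :=
  Set.pi_univ_Icc (0 : ι → ℝ) 1 ▸
    UniqueDiffOn.univ_pi fun _ => uniqueDiffOn_Icc zero_lt_one

section PartialDerivative

variable {d : ℕ} (i : Fin d)

lemma pdW_congr {f g : (Fin d → ℝ) → ℝ} (h : Set.EqOn f g (Set.Icc 0 1)) {x : Fin d → ℝ}
    (hx : x ∈ Set.Icc 0 1) : pdW i f x = pdW i g x := by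
  rw [pdW, pdW, fderivWithin_congr h (h hx)]

lemma pdW_sum_mul_add_const {ι : Type*} [Fintype ι] (f : ι → (Fin d → ℝ) → ℝ) (θ : ι → ℝ)
    (c : ℝ) {x : Fin d → ℝ} (hx : x ∈ Set.Icc 0 1)
    (hf : ∀ a, DifferentiableWithinAt ℝ (f a) (Set.Icc 0 1) x) :
    pdW i (fun y => ∑ a, θ a * f a y + c) x = ∑ a, θ a * pdW i (f a) x := by
  have hderiv := (HasFDerivWithinAt.fun_sum (u := univ) fun a _ =>
    ((hf a).hasFDerivWithinAt.const_mul (θ a))).add_const c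
  rw [pdW, hderiv.fderivWithin (uniqueDiffOn_Icc_zero_one_pi x hx)]
  simp [pdW]

lemma differentiableOn_pdW {f : (Fin d → ℝ) → ℝ} (hf : ContDiffOn ℝ 2 f (Set.Icc 0 1)) :
    DifferentiableOn ℝ (pdW i f) (Set.Icc 0 1) :=
  ((hf.fderivWithin (m := 1) uniqueDiffOn_Icc_zero_one_pi (by norm_num)).clm_apply
    contDiffOn_const).differentiableOn (by norm_num)

end PartialDerivative

section ExponentialFamily

variable {d N : ℕ} (φ : (Fin d → ℝ) → Fin N → ℝ) (θ : Fin N → ℝ) (c : ℝ) (i : Fin d)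

lemma pdW_log_expFamily (hφ : DifferentiableOn ℝ φ (Set.Icc 0 1)) {x : Fin d → ℝ}
    (hx : x ∈ Set.Icc 0 1) :
    pdW i (fun y => Real.log (Real.exp ((∑ a, θ a * φ y a) + c))) x
      = ∑ a, θ a * pdW i (fun y => φ y a) x := by
  simp only [Real.log_exp]
  exact pdW_sum_mul_add_const i (fun a y => φ y a) θ c hx
    fun a => differentiableOn_pi.mp hφ a x hx

lemma pdW_pdW_log_expFamily (hφ : ContDiffOn ℝ 2 φ (Set.Icc 0 1)) {x : Fin d → ℝ}
    (hx : x ∈ Set.Icc 0 1) :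
    pdW i (pdW i fun y => Real.log (Real.exp ((∑ a, θ a * φ y a) + c))) x
      = ∑ a, θ a * pdW i (pdW i fun y => φ y a) x := by
  rw [pdW_congr i (fun y hy => pdW_log_expFamily φ θ c i
    (hφ.differentiableOn (by norm_num)) hy) hx]
  simpa using pdW_sum_mul_add_const i (fun a => pdW i fun y => φ y a) θ 0 hx
    fun a => differentiableOn_pdW i (contDiffOn_pi.mp hφ a) x hx

lemma hScoreW_expFamily (hφ : ContDiffOn ℝ 2 φ (Set.Icc 0 1)) {x : Fin d → ℝ}
    (hx : x ∈ Set.Icc 0 1) :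
    hScoreW (fun y => Real.exp ((∑ a, θ a * φ y a) + c)) x
      = ∑ i, ((1/2) * (x i)^2 * (1 - x i)^2 * (∑ a, θ a * pdW i (fun y => φ y a) x)^2
          - 2 * (2 * x i - 1) * x i * (1 - x i) * ∑ a, θ a * pdW i (fun y => φ y a) x
          + (x i)^2 * (1 - x i)^2 * ∑ a, θ a * pdW i (pdW i fun y => φ y a) x) := by
  refine sum_congr rfl fun i _ => ?_
  rw [pdW_log_expFamily φ θ c i (hφ.differentiableOn (by norm_num)) hx,
    pdW_pdW_log_expFamily φ θ c i hφ hx]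

end ExponentialFamily

section Algebra

variable {ι κ : Type*} [Fintype ι] [Fintype κ]

lemma sum_sum_mul_sum_mul_eq_sum_sq (u : ι → κ → ℝ) (θ : κ → ℝ) :
    ∑ a, ∑ b, θ a * (∑ i, u i a * u i b) * θ b = ∑ i, (∑ a, θ a * u i a)^2 := by
  calc ∑ a, ∑ b, θ a * (∑ i, u i a * u i b) * θ b
      = ∑ a, ∑ i, ∑ b, θ a * u i a * (θ b * u i b) := by
        refine sum_congr rfl fun a _ => ?_
        rw [sum_comm]
        simp only [mul_sum, sum_mul]
        exact sum_congr rfl fun _ _ => sum_congr rfl fun _ _ => by ring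
    _ = ∑ i, (∑ a, θ a * u i a)^2 := by simp only [sq, sum_mul_sum]; exact sum_comm

lemma sum_hyvarinen_eq_quadratic_add_linear (x : ι → ℝ) (θ : κ → ℝ) (p s : ι → κ → ℝ) :
    ∑ i, ((1/2) * (x i)^2 * (1 - x i)^2 * (∑ a, θ a * p i a)^2
        - 2 * (2 * x i - 1) * x i * (1 - x i) * ∑ a, θ a * p i a
        + (x i)^2 * (1 - x i)^2 * ∑ a, θ a * s i a)
      = (1/2) * (∑ a, ∑ b,
            θ a * (∑ i, (x i * (1 - x i) * p i a) * (x i * (1 - x i) * p i b)) * θ b)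
        + ∑ a, (∑ i, (-2 * (2 * x i - 1) * x i * (1 - x i) * p i a
            + (x i)^2 * (1 - x i)^2 * s i a)) * θ a := by
  rw [sum_sum_mul_sum_mul_eq_sum_sq (fun i a => x i * (1 - x i) * p i a), mul_sum]
  simp only [sum_mul]
  rw [sum_comm (s := univ (α := κ)), ← sum_add_distrib]
  refine sum_congr rfl fun i _ => ?_
  have hquad : ∑ a, θ a * (x i * (1 - x i) * p i a) = x i * (1 - x i) * ∑ a, θ a * p i a := by
    rw [mul_sum]; exact sum_congr rfl fun _ _ => by ring
  have hlin : ∑ a, (-2 * (2 * x i - 1) * x i * (1 - x i) * p i a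
        + (x i)^2 * (1 - x i)^2 * s i a) * θ a
      = -2 * (2 * x i - 1) * x i * (1 - x i) * ∑ a, θ a * p i a
        + (x i)^2 * (1 - x i)^2 * ∑ a, θ a * s i a := by
    rw [mul_sum, mul_sum, ← sum_add_distrib]; exact sum_congr rfl fun _ _ => by ring
  rw [hquad, hlin]
  ring

lemma posSemidef_of_sum_mul (u : ι → κ → ℝ) :
    (Matrix.of fun a b => ∑ i, u i a * u i b).PosSemidef := by
  convert Matrix.posSemidef_conjTranspose_mul_self (Matrix.of u) using 1
  ext a b
  simp [Matrix.mul_apply]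

end Algebra

/-- Second part of Proposition 1: for the exponential family
`q_θ(x) = exp(⟨θ, φ(x)⟩ + c)` on `[0,1]^d` with `φ` twice continuously differentiable,
the bounded-domain Hyvärinen score is `h(x,q_θ) = (1/2) θᵀ Ã(x) θ + K(x)ᵀθ` with
`a_i(x) = x_i(1−x_i) ∂_i φ(x)`, `Ã(x) = ∑ i a_i(x) a_i(x)ᵀ` positive semidefinite, and
`K(x) = ∑ i [ −2(2x_i−1)x_i(1−x_i) ∂_i φ + x_i²(1−x_i)² ∂_i² φ ]`. -/
theorem stmt4 {d N : ℕ} (φ : (Fin d → ℝ) → Fin N → ℝ)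
    (hφ : ContDiffOn ℝ 2 φ (Set.Icc 0 1)) (θ : Fin N → ℝ) (c : ℝ) :
    (∀ x ∈ Set.Icc (0 : Fin d → ℝ) 1,
      hScoreW (fun y => Real.exp ((∑ a : Fin N, θ a * φ y a) + c)) x
        = (1/2) * (∑ a : Fin N, ∑ b : Fin N,
              θ a * (∑ i : Fin d,
                (x i * (1 - x i) * pdW i (fun y => φ y a) x)
                  * (x i * (1 - x i) * pdW i (fun y => φ y b) x)) * θ b)
          + ∑ a : Fin N,
              (∑ i : Fin d,
                (-2 * (2 * x i - 1) * (x i) * (1 - x i) * pdW i (fun y => φ y a) x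
                  + (x i)^2 * (1 - x i)^2 * pdW i (pdW i (fun y => φ y a)) x)) * θ a)
    ∧ (∀ x ∈ Set.Icc (0 : Fin d → ℝ) 1,
        (Matrix.of fun a b : Fin N =>
          ∑ i : Fin d,
            (x i * (1 - x i) * pdW i (fun y => φ y a) x)
              * (x i * (1 - x i) * pdW i (fun y => φ y b) x)).PosSemidef) := by
  refine ⟨fun x hx => ?_, fun x _ => posSemidef_of_sum_mul _⟩
  rw [hScoreW_expFamily φ θ c hφ hx]
  exact sum_hyvarinen_eq_quadratic_add_linear x θ _ _
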